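/- Let p > 2 be a prime, let f, g : 𝔽_p → ℂ be 1-bounded functions, and let ξ ∈ 𝔽_p with ξ ≠ 0. Then |𝔼_{x, y ∈ 𝔽_p} f(x) g(x + y) e_p(ξ·(x + y²))| ≤ 1/√p. -/

import Mathlib

/-- The additive character `e_p(z) = e^{2πiz/p}` on `𝔽_p`. -/
noncomputable def ep (p : ℕ) [NeZero p] (z : ZMod p) : ℂ :=
  Complex.exp (2 * Real.pi * Complex.I * (z.val : ℂ) / p)

lemma ep_eq_stdAddChar (p : ℕ) [NeZero p] (z : ZMod p) :
    ep p z = ZMod.stdAddChar z := by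
  rw [ZMod.stdAddChar_apply, ZMod.toCircle_apply, ep]

lemma abs_stdAddChar (p : ℕ) [NeZero p] (z : ZMod p) :
    ‖(ZMod.stdAddChar z : ℂ)‖ = 1 := by
  rw [ZMod.stdAddChar_apply]; exact Circle.norm_coe _

lemma conj_stdAddChar (p : ℕ) [NeZero p] (z : ZMod p) :
    (starRingEnd ℂ) (ZMod.stdAddChar z) = ZMod.stdAddChar (-z) := by
  have h1 : ZMod.stdAddChar z * ZMod.stdAddChar (-z) = 1 := by
    rw [← AddChar.map_add_eq_mul, add_neg_cancel, AddChar.map_zero_eq_one]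
  have h2 : ZMod.stdAddChar z * (starRingEnd ℂ) (ZMod.stdAddChar z) = 1 := by
    rw [Complex.mul_conj, Complex.normSq_eq_norm_sq, abs_stdAddChar]
    norm_num
  have hne : ZMod.stdAddChar z ≠ 0 := by
    intro h
    rw [h, zero_mul] at h1; exact one_ne_zero h1.symm
  exact mul_left_cancel₀ hne (h2.trans h1.symm)

/-- **Major arc lemma.** Let `p > 2` be prime, `f, g : 𝔽_p → ℂ` be `1`-bounded, and
`ξ ∈ 𝔽_p` nonzero. Then `|𝔼_{x,y} f(x) g(x+y) e_p(ξ(x+y²))| ≤ 1/√p`. -/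
theorem major_arc (p : ℕ) [Fact p.Prime] (hp : 2 < p) (f g : ZMod p → ℂ)
    (hf : ∀ x, ‖f x‖ ≤ 1) (hg : ∀ x, ‖g x‖ ≤ 1)
    (ξ : ZMod p) (hξ : ξ ≠ 0) :
    ‖((∑ x : ZMod p, ∑ y : ZMod p,
        f x * g (x + y) * ep p (ξ * (x + y ^ 2))) / (p : ℂ) ^ 2)‖ ≤
      1 / Real.sqrt p := by
  have hpprime := Fact.out (p := p.Prime)
  have hp0 : (0 : ℝ) < p := by positivity
  let ψ : AddChar (ZMod p) ℂ := ZMod.stdAddChar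
  set T : ZMod p → ℂ := fun x => ∑ u : ZMod p, g u * ψ (ξ * (u - x) ^ 2) with hT
  -- Step 1: rewrite the sum
  have hS : (∑ x : ZMod p, ∑ y : ZMod p, f x * g (x + y) * ep p (ξ * (x + y ^ 2)))
      = ∑ x : ZMod p, f x * ψ (ξ * x) * T x := by
    refine Finset.sum_congr rfl fun x _ => ?_
    rw [hT]
    have : ∑ y : ZMod p, f x * g (x + y) * ep p (ξ * (x + y ^ 2))
        = ∑ u : ZMod p, f x * g u * ep p (ξ * (x + (u - x) ^ 2)) := by
      apply Fintype.sum_equiv (Equiv.addLeft x)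
      intro y
      simp [Equiv.addLeft]
    rw [this, Finset.mul_sum]
    refine Finset.sum_congr rfl fun u _ => ?_
    rw [ep_eq_stdAddChar, mul_add, AddChar.map_add_eq_mul]
    ring
  -- Step 2: |S| ≤ ∑ |T x|
  have habs : ‖∑ x : ZMod p, ∑ y : ZMod p,
      f x * g (x + y) * ep p (ξ * (x + y ^ 2))‖ ≤ ∑ x : ZMod p, ‖T x‖ := by
    rw [hS]
    refine (norm_sum_le _ _).trans ?_
    refine Finset.sum_le_sum fun x _ => ?_
    rw [norm_mul, norm_mul, abs_stdAddChar, mul_one]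
    have hTnn : (0:ℝ) ≤ ‖T x‖ := norm_nonneg _
    nlinarith [hf x, norm_nonneg (f x)]
  -- Step 3: ∑_x |T x|² = p * ∑_u |g u|²
  have horth : ∀ b : ZMod p, ∑ x : ZMod p, ψ (x * b) = if b = 0 then (p : ℂ) else 0 := by
    intro b
    have := AddChar.sum_mulShift b (ZMod.isPrimitive_stdAddChar p)
    rw [ZMod.card p] at this
    rw [show (∑ x : ZMod p, ψ (x * b)) = ∑ x : ZMod p, ZMod.stdAddChar (x * b) from rfl, this]
    split_ifs <;> simp
  have h2ne : (2 : ZMod p) ≠ 0 := by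
    have : ((2 : ℕ) : ZMod p) ≠ 0 := by
      rw [Ne, ZMod.natCast_eq_zero_iff]
      exact fun h => absurd (Nat.le_of_dvd (by norm_num) h) (not_le.mpr hp)
    simpa using this
  have hTsq : ∑ x : ZMod p, (T x * (starRingEnd ℂ) (T x)) = (p : ℂ) * ∑ u : ZMod p,
      g u * (starRingEnd ℂ) (g u) := by
    have expand : ∀ x : ZMod p, T x * (starRingEnd ℂ) (T x)
        = ∑ u : ZMod p, ∑ v : ZMod p,
          g u * (starRingEnd ℂ) (g v) * ψ (ξ * ((u - x) ^ 2 - (v - x) ^ 2)) := by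
      intro x
      rw [hT, map_sum, Finset.sum_mul_sum]
      refine Finset.sum_congr rfl fun u _ => Finset.sum_congr rfl fun v _ => ?_
      rw [RingHom.map_mul (starRingEnd ℂ), conj_stdAddChar]
      have : ψ (ξ * (u - x) ^ 2) * ψ (-(ξ * (v - x) ^ 2))
          = ψ (ξ * ((u - x) ^ 2 - (v - x) ^ 2)) := by
        rw [← AddChar.map_add_eq_mul]; ring_nf
      rw [← this]; ring
    have swap3 : ∀ (F : ZMod p → ZMod p → ZMod p → ℂ),
        ∑ x : ZMod p, ∑ u : ZMod p, ∑ v : ZMod p, F x u v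
          = ∑ u : ZMod p, ∑ v : ZMod p, ∑ x : ZMod p, F x u v := by
      intro F
      rw [Finset.sum_comm]
      exact Finset.sum_congr rfl fun u _ => Finset.sum_comm
    calc ∑ x : ZMod p, (T x * (starRingEnd ℂ) (T x))
        = ∑ u : ZMod p, ∑ v : ZMod p, g u * (starRingEnd ℂ) (g v) *
            ∑ x : ZMod p, ψ (ξ * ((u - x) ^ 2 - (v - x) ^ 2)) := by
          simp_rw [expand]
          rw [swap3 (fun x u v => g u * (starRingEnd ℂ) (g v) *
            ψ (ξ * ((u - x) ^ 2 - (v - x) ^ 2)))]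
          simp_rw [← Finset.mul_sum]
      _ = (p : ℂ) * ∑ u : ZMod p, g u * (starRingEnd ℂ) (g u) := by
          have key : ∀ u v : ZMod p, ∑ x : ZMod p, ψ (ξ * ((u - x) ^ 2 - (v - x) ^ 2))
              = if u = v then (p : ℂ) else 0 := by
            intro u v
            have heq : ∀ x : ZMod p, ξ * ((u - x) ^ 2 - (v - x) ^ 2)
                = ξ * (u ^ 2 - v ^ 2) + x * (-(2 * ξ * (u - v))) := by
              intro x; ring
            simp_rw [heq, AddChar.map_add_eq_mul, ← Finset.mul_sum, horth]
            have hiff : -(2 * ξ * (u - v)) = 0 ↔ u = v := by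
              rw [neg_eq_zero, mul_eq_zero, mul_eq_zero, sub_eq_zero]
              simp [h2ne, hξ]
            split_ifs with h1 h2 h2
            · subst h2
              simp
            · exact absurd (hiff.mp h1) h2
            · exact absurd (hiff.mpr h2) h1
            · rw [mul_zero]
          rw [Finset.mul_sum]
          refine Finset.sum_congr rfl fun u _ => ?_
          rw [Finset.sum_eq_single u]
          · rw [key, if_pos rfl]; ring
            
          · intro v _ hvu
            rw [key, if_neg (Ne.symm hvu), mul_zero]
          · intro h; exact absurd (Finset.mem_univ u) h
    
  -- Step 4: real bounds
  have hTsq_real : ∑ x : ZMod p, (‖T x‖) ^ 2 ≤ (p : ℝ) ^ 2 := by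
    have h1 : ∑ x : ZMod p, (‖T x‖) ^ 2
        = (p : ℝ) * ∑ u : ZMod p, (‖g u‖) ^ 2 := by
      have h := hTsq
      simp_rw [Complex.mul_conj] at h
      have h' : ∑ x : ZMod p, Complex.normSq (T x)
          = (p : ℝ) * ∑ u : ZMod p, Complex.normSq (g u) := by exact_mod_cast h
      simp_rw [Complex.sq_norm]
      exact h'
    rw [h1]
    have : ∑ u : ZMod p, (‖g u‖) ^ 2 ≤ ∑ _u : ZMod p, (1 : ℝ) := by
      refine Finset.sum_le_sum fun u _ => ?_
      have := hg u
      nlinarith [norm_nonneg (g u)]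
    calc (p : ℝ) * ∑ u : ZMod p, (‖g u‖) ^ 2
        ≤ (p : ℝ) * ∑ _u : ZMod p, (1 : ℝ) := by
          exact mul_le_mul_of_nonneg_left this (le_of_lt hp0)
      _ = (p : ℝ) ^ 2 := by
          simp [ZMod.card p]; ring
  have hCS : (∑ x : ZMod p, ‖T x‖) ^ 2
      ≤ (p : ℝ) * ∑ x : ZMod p, (‖T x‖) ^ 2 := by
    have := sq_sum_le_card_mul_sum_sq (s := Finset.univ)
      (f := fun x : ZMod p => ‖T x‖)
    simpa [ZMod.card p] using this
  have hsum : ∑ x : ZMod p, ‖T x‖ ≤ (p : ℝ) * Real.sqrt p := by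
    have h3 : (∑ x : ZMod p, ‖T x‖) ^ 2 ≤ (p : ℝ) ^ 3 := by
      calc (∑ x : ZMod p, ‖T x‖) ^ 2
          ≤ (p : ℝ) * ∑ x : ZMod p, (‖T x‖) ^ 2 := hCS
        _ ≤ (p : ℝ) * (p : ℝ) ^ 2 := mul_le_mul_of_nonneg_left hTsq_real (le_of_lt hp0)
        _ = (p : ℝ) ^ 3 := by ring
    have hnn : (0 : ℝ) ≤ ∑ x : ZMod p, ‖T x‖ :=
      Finset.sum_nonneg fun x _ => norm_nonneg _
    have step : ∑ x : ZMod p, ‖T x‖ ≤ Real.sqrt ((p : ℝ) ^ 3) := by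
      rw [← Real.sqrt_sq hnn]
      exact Real.sqrt_le_sqrt h3
    calc ∑ x : ZMod p, ‖T x‖ ≤ Real.sqrt ((p : ℝ) ^ 3) := step
      _ = (p : ℝ) * Real.sqrt p := by
          rw [pow_succ, Real.sqrt_mul (by positivity), Real.sqrt_sq (le_of_lt hp0)]
  -- Conclusion
  rw [norm_div]
  have hden : ‖(p : ℂ) ^ 2‖ = (p : ℝ) ^ 2 := by
    rw [norm_pow, Complex.norm_natCast]
  rw [hden, div_le_div_iff₀ (by positivity) (by positivity)]
  calc ‖∑ x : ZMod p, ∑ y : ZMod p, f x * g (x + y) * ep p (ξ * (x + y ^ 2))‖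
        * Real.sqrt p
      ≤ ((p : ℝ) * Real.sqrt p) * Real.sqrt p :=
        mul_le_mul_of_nonneg_right (habs.trans hsum) (Real.sqrt_nonneg _)
    _ = (p : ℝ) * ((Real.sqrt p) * Real.sqrt p) := by ring
    _ = 1 * (p : ℝ) ^ 2 := by
        rw [Real.mul_self_sqrt (le_of_lt hp0)]; ring
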